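/- For every constant K > 0 there is a constant C = C(K) > 0 such that for every integer n ≥ 2 and every integer M with 1 ≤ M ≤ K·(log n)^2, the sum over m from M to n of r(n, m) is at most C·n·(log n)/M. (Here log denotes the natural logarithm.) -/

import Mathlib

/-- The sequence of quotients produced by the Euclidean algorithm run on `(n, d)`. -/
def euclidQuotients : ℕ → ℕ → List ℕ
  | _, 0 => []
  | n, d + 1 => n / (d + 1) :: euclidQuotients (d + 1) (n % (d + 1))
termination_by n d => d
decreasing_by exact Nat.mod_lt _ (Nat.succ_pos d)

/-- `r(n, m)`: the total number of occurrences of `m` among the quotient sequences of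
`(n, d)`, summed over all `d` with `1 ≤ d ≤ n - 1` and `gcd(d, n) = 1`. -/
def quotOcc (n m : ℕ) : ℕ :=
  ∑ d ∈ Finset.filter (fun d => Nat.gcd d n = 1) (Finset.Ico 1 n),
    (euclidQuotients n d).count m

/-!
Run Euclid's algorithm on `(n, d)` and record at each state `(a, b)` the continuants `(A, u)` of
the quotients produced so far, so that `n = A * a + u * b` and `gcd A u = 1`. If the quotient
`a / b` is at least `M`, then `M * A * b ≤ n`, `gcd A b = gcd A n` and `u * b ≡ n [MOD A]`.
Continuants determine a sequence of positive quotients up to the ambiguity of a final quotient `1`,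
so the triple `(A, u, b)` together with the bit `n / d = 1` determines `d` and the state. For a
fixed `A` the congruence leaves at most `2 n / (M A)` pairs `(u, b)`, so the count is at most
`4 ∑_{A ≤ n} n / (M A) ≤ 4 (n / M) (1 + log n)`.
-/

open Finset

lemma sum_count_eq_countP_mem {α : Type*} [DecidableEq α] (s : Finset α) (l : List α) :
    ∑ m ∈ s, l.count m = l.countP (· ∈ s) := by
  induction l with
  | nil => simp
  | cons a t ih => simp [List.count_cons, sum_add_distrib, List.countP_cons, ih]

lemma card_filter_mul_mod_eq_le (A b c : ℕ) (hA : 0 < A) :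
    #{u ∈ range (A + 1) | u * b % A = c} ≤ A.gcd b + 1 := by
  set g := A.gcd b
  have hgA : A / (A / g) = g := Nat.div_div_self (Nat.gcd_dvd_left A b) hA.ne'
  calc #{u ∈ range (A + 1) | u * b % A = c} ≤ #(range (g + 1)) := by
        refine card_le_card_of_injOn (· / (A / g)) (fun u hu => ?_) fun u₁ hu₁ u₂ hu₂ h => ?_
        · simp only [mem_coe, mem_filter, mem_range] at hu ⊢
          have := Nat.div_le_div_right (c := A / g) (Nat.lt_succ_iff.1 hu.1)
          omega
        · simp only [mem_coe, mem_filter] at hu₁ hu₂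
          have hmod : u₁ ≡ u₂ [MOD A / g] :=
            Nat.ModEq.cancel_right_div_gcd hA (hu₁.2.trans hu₂.2.symm)
          rw [← Nat.div_add_mod u₁ (A / g), ← Nat.div_add_mod u₂ (A / g), hmod]
          exact congrArg (_ * · + _) h
    _ = g + 1 := card_range _

lemma card_filter_gcd_eq_le (A n N : ℕ) : #{b ∈ Icc 1 N | A.gcd b = A.gcd n} ≤ N / A.gcd n := by
  rw [← Nat.Ioc_filter_dvd_card_eq_div]
  refine card_le_card fun b hb => ?_
  simp only [mem_filter, mem_Icc, mem_Ioc] at hb ⊢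
  exact ⟨⟨hb.1.1, hb.1.2⟩, hb.2 ▸ Nat.gcd_dvd_right A b⟩

/-- `contPair s [qⱼ, …, q₁]` is the row vector `s * Q q₁ * ⋯ * Q qⱼ` with `Q q = !![q, 1; 1, 0]`:
the newest quotient is at the head of the list. -/
def contPair (s : ℕ × ℕ) : List ℕ → ℕ × ℕ
  | [] => s
  | q :: l => (q * (contPair s l).1 + (contPair s l).2, (contPair s l).1)

section contPair

variable {l : List ℕ}

lemma contPair_cons_dot (s : ℕ × ℕ) (l : List ℕ) (a b : ℕ) :
    (contPair s (a / b :: l)).1 * b + (contPair s (a / b :: l)).2 * (a % b) =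
      (contPair s l).1 * a + (contPair s l).2 * b := by
  conv_rhs => rw [← Nat.div_add_mod a b]
  simp only [contPair]
  ring

lemma coprime_contPair (l : List ℕ) : Nat.Coprime (contPair (1, 0) l).1 (contPair (1, 0) l).2 := by
  induction l with
  | nil => simp [contPair]
  | cons q t ih => exact (Nat.coprime_mul_right_add_left _ _ q).2 ih.symm

lemma one_le_contPair_fst (hl : ∀ q ∈ l, 0 < q) : 1 ≤ (contPair (1, 0) l).1 := by
  induction l with
  | nil => simp [contPair]
  | cons q t ih =>
    have hA := ih fun p hp => hl p (List.mem_cons_of_mem q hp)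
    have hq := hl q List.mem_cons_self
    simp only [contPair]
    nlinarith

lemma contPair_snd_le_fst (hl : ∀ q ∈ l, 0 < q) : (contPair (1, 0) l).2 ≤ (contPair (1, 0) l).1 := by
  cases l with
  | nil => simp [contPair]
  | cons q t =>
    simp only [contPair]
    nlinarith [hl q List.mem_cons_self]

lemma contPair_snd_eq_zero_iff (hl : ∀ q ∈ l, 0 < q) : (contPair (1, 0) l).2 = 0 ↔ l = [] := by
  cases l with
  | nil => simp [contPair]
  | cons q t =>
    have := one_le_contPair_fst fun p hp => hl p (List.mem_cons_of_mem q hp)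
    simp only [contPair, reduceCtorEq, iff_false]
    omega

lemma contPair_fst_eq_one (hl : ∀ q ∈ l, 0 < q) (h : (contPair (1, 0) l).1 = 1) :
    l = [] ∨ l = [1] := by
  cases l with
  | nil => simp
  | cons q t =>
    have ht : ∀ p ∈ t, 0 < p := fun p hp => hl p (List.mem_cons_of_mem q hp)
    have hA := one_le_contPair_fst ht
    have hq := hl q List.mem_cons_self
    simp only [contPair] at h
    have hq1 : q = 1 := by nlinarith
    subst hq1
    have : (contPair (1, 0) t).2 = 0 := by omega
    simp [(contPair_snd_eq_zero_iff ht).1 this]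

lemma contPair_snd_lt_fst (hl : ∀ q ∈ l, 0 < q) (h : l ≠ [1]) :
    (contPair (1, 0) l).2 < (contPair (1, 0) l).1 := by
  cases l with
  | nil => simp [contPair]
  | cons q t =>
    have ht : ∀ p ∈ t, 0 < p := fun p hp => hl p (List.mem_cons_of_mem q hp)
    have hA := one_le_contPair_fst ht
    have hq := hl q List.mem_cons_self
    simp only [contPair]
    by_contra hle
    have hq1 : q = 1 := by nlinarith
    have hu : (contPair (1, 0) t).2 = 0 := by subst hq1; omega
    exact h (by rw [hq1, (contPair_snd_eq_zero_iff ht).1 hu])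

lemma eq_and_contPair_eq_of_contPair_cons_eq {q₁ q₂ : ℕ} {t₁ t₂ : List ℕ}
    (ht₁ : ∀ q ∈ t₁, 0 < q) (ht₂ : ∀ q ∈ t₂, 0 < q) (hne₁ : t₁ ≠ [1]) (hne₂ : t₂ ≠ [1])
    (h : contPair (1, 0) (q₁ :: t₁) = contPair (1, 0) (q₂ :: t₂)) :
    q₁ = q₂ ∧ contPair (1, 0) t₁ = contPair (1, 0) t₂ := by
  simp only [contPair, Prod.mk.injEq] at h
  obtain ⟨hfst, hA⟩ := h
  have hlt₁ := contPair_snd_lt_fst ht₁ hne₁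
  have hlt₂ := contPair_snd_lt_fst ht₂ hne₂
  rw [hA] at hfst hlt₁
  set A := (contPair (1, 0) t₂).1
  set N := q₂ * A + (contPair (1, 0) t₂).2
  have hA0 : 0 < A := by omega
  obtain ⟨hq₁, hu₁⟩ := (Nat.div_mod_unique (a := N) (d := q₁) hA0).2 ⟨by linarith, hlt₁⟩
  obtain ⟨hq₂, hu₂⟩ := (Nat.div_mod_unique (a := N) (d := q₂) hA0).2 ⟨by ring, hlt₂⟩
  exact ⟨hq₁.symm.trans hq₂, Prod.ext hA (hu₁.symm.trans hu₂)⟩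

/-- The continued fractions `[…, q, 1]` and `[…, q + 1]` have the same continuants; knowing
whether the last entry is `1` removes this ambiguity. -/
theorem eq_of_contPair_eq {l₁ l₂ : List ℕ} (h₁ : ∀ q ∈ l₁, 0 < q) (h₂ : ∀ q ∈ l₂, 0 < q)
    (h : contPair (1, 0) l₁ = contPair (1, 0) l₂)
    (hlast : l₁.getLast? = some 1 ↔ l₂.getLast? = some 1) : l₁ = l₂ := by
  induction l₁ generalizing l₂ with
  | nil =>
    have : (contPair (1, 0) l₂).2 = 0 := by rw [← h]; rfl
    exact ((contPair_snd_eq_zero_iff h₂).1 this).symm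
  | cons q₁ t₁ ih =>
    obtain _ | ⟨q₂, t₂⟩ := l₂
    · have : (contPair (1, 0) (q₁ :: t₁)).2 = 0 := by rw [h]; rfl
      simp [contPair_snd_eq_zero_iff h₁] at this
    have ht₁ : ∀ p ∈ t₁, 0 < p := fun p hp => h₁ p (List.mem_cons_of_mem q₁ hp)
    have ht₂ : ∀ p ∈ t₂, 0 < p := fun p hp => h₂ p (List.mem_cons_of_mem q₂ hp)
    have hA : (contPair (1, 0) t₁).1 = (contPair (1, 0) t₂).1 := congrArg Prod.snd h
    by_cases hA1 : (contPair (1, 0) t₁).1 = 1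
    · have hq₁ := h₁ q₁ List.mem_cons_self
      have hq₂ := h₂ q₂ List.mem_cons_self
      rcases contPair_fst_eq_one ht₁ hA1 with rfl | rfl <;>
        rcases contPair_fst_eq_one ht₂ (hA ▸ hA1) with rfl | rfl <;>
        simp [contPair] at h hlast ⊢ <;> omega
    · have hne : ∀ {t : List ℕ}, (contPair (1, 0) t).1 ≠ 1 → t ≠ [] ∧ t ≠ [1] := by
        rintro t ht
        exact ⟨by rintro rfl; simp [contPair] at ht, by rintro rfl; simp [contPair] at ht⟩
      obtain ⟨hnil₁, hne₁⟩ := hne hA1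
      obtain ⟨hnil₂, hne₂⟩ := hne (hA ▸ hA1)
      obtain ⟨rfl, ht⟩ := eq_and_contPair_eq_of_contPair_cons_eq ht₁ ht₂ hne₁ hne₂ h
      refine congrArg _ (ih ht₁ ht₂ ht ?_)
      simpa [List.getLast?_cons, Option.getD_eq_iff, List.getLast?_eq_none_iff, hnil₁, hnil₂]
        using hlast

end contPair

/-- A state `(a, b)` of Euclid's algorithm with the quotients produced so far, newest first. -/
structure EuclidState where
  quots : List ℕ
  a : ℕ
  b : ℕ
deriving DecidableEq

def euclidStates : List ℕ → ℕ → ℕ → List EuclidState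
  | _, _, 0 => []
  | l, a, b + 1 => ⟨l, a, b + 1⟩ :: euclidStates (a / (b + 1) :: l) (b + 1) (a % (b + 1))
termination_by _ _ b => b
decreasing_by exact Nat.mod_lt _ (Nat.succ_pos b)

section euclidStates

variable {l : List ℕ} {a b : ℕ} {s : EuclidState}

lemma map_quot_euclidStates (l : List ℕ) (a b : ℕ) :
    (euclidStates l a b).map (fun s => s.a / s.b) = euclidQuotients a b := by
  fun_induction euclidStates l a b with
  | case1 => simp [euclidQuotients]
  | case2 l a b ih => rw [euclidQuotients, List.map_cons, ih]

lemma b_le_of_mem_euclidStates (hs : s ∈ euclidStates l a b) : s.b ≤ b := by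
  fun_induction euclidStates l a b with
  | case1 => simp at hs
  | case2 l a b ih =>
    rcases List.mem_cons.1 hs with rfl | hs
    · rfl
    · exact (ih hs).trans (Nat.mod_lt _ b.succ_pos).le

lemma nodup_euclidStates (l : List ℕ) (a b : ℕ) : (euclidStates l a b).Nodup := by
  fun_induction euclidStates l a b with
  | case1 => exact List.nodup_nil
  | case2 l a b ih =>
    exact List.nodup_cons.2
      ⟨fun hs => (Nat.mod_lt a b.succ_pos).not_ge (b_le_of_mem_euclidStates hs), ih⟩

lemma b_pos_of_mem_euclidStates (hs : s ∈ euclidStates l a b) : 0 < s.b := by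
  fun_induction euclidStates l a b with
  | case1 => simp at hs
  | case2 l a b ih =>
    rcases List.mem_cons.1 hs with rfl | hs
    exacts [b.succ_pos, ih hs]

lemma b_le_a_of_mem_euclidStates (hba : b ≤ a) (hs : s ∈ euclidStates l a b) : s.b ≤ s.a := by
  fun_induction euclidStates l a b with
  | case1 => simp at hs
  | case2 l a b ih =>
    rcases List.mem_cons.1 hs with rfl | hs
    exacts [hba, ih (Nat.mod_lt _ b.succ_pos).le hs]

lemma exists_quots_eq_append_of_mem_euclidStates (hba : b ≤ a) (hs : s ∈ euclidStates l a b) :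
    ∃ l' : List ℕ, (∀ q ∈ l', 0 < q) ∧ s.quots = l' ++ l := by
  fun_induction euclidStates l a b with
  | case1 => simp at hs
  | case2 l a b ih =>
    rcases List.mem_cons.1 hs with rfl | hs
    · exact ⟨[], by simp⟩
    · obtain ⟨l', hl', hq⟩ := ih (Nat.mod_lt _ b.succ_pos).le hs
      refine ⟨l' ++ [a / (b + 1)], ?_, by simp [hq]⟩
      simp only [List.mem_append, List.mem_singleton]
      rintro q (hq | rfl)
      exacts [hl' q hq, Nat.div_pos hba b.succ_pos]

lemma dot_contPair_of_mem_euclidStates (σ : ℕ × ℕ) (hs : s ∈ euclidStates l a b) :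
    (contPair σ s.quots).1 * s.a + (contPair σ s.quots).2 * s.b =
      (contPair σ l).1 * a + (contPair σ l).2 * b := by
  fun_induction euclidStates l a b with
  | case1 => simp at hs
  | case2 l a b ih =>
    rcases List.mem_cons.1 hs with rfl | hs
    · rfl
    · rw [ih hs, contPair_cons_dot]

end euclidStates

section injection

variable {n d e : ℕ} {s t : EuclidState}

lemma contPair_dot_of_mem_euclidStates (hs : s ∈ euclidStates [] n d) :
    (contPair (1, 0) s.quots).1 * s.a + (contPair (1, 0) s.quots).2 * s.b = n ∧
      (contPair (0, 1) s.quots).1 * s.a + (contPair (0, 1) s.quots).2 * s.b = d := by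
  simpa [contPair] using
    And.intro (dot_contPair_of_mem_euclidStates (1, 0) hs) (dot_contPair_of_mem_euclidStates (0, 1) hs)

lemma pos_of_mem_quots (hdn : d ≤ n) (hs : s ∈ euclidStates [] n d) : ∀ q ∈ s.quots, 0 < q := by
  obtain ⟨l', hl', hq⟩ := exists_quots_eq_append_of_mem_euclidStates hdn hs
  simpa [hq] using hl'

lemma quots_getLast?_eq_some_one_iff (hdn : d ≤ n) (hs : s ∈ euclidStates [] n d) :
    s.quots.getLast? = some 1 ↔ s.quots ≠ [] ∧ n / d = 1 := by
  obtain _ | d := d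
  · simp [euclidStates] at hs
  rw [euclidStates, List.mem_cons] at hs
  rcases hs with rfl | hs
  · simp
  · obtain ⟨l', -, hl'⟩ :=
      exists_quots_eq_append_of_mem_euclidStates (Nat.mod_lt _ d.succ_pos).le hs
    simp [hl']

theorem eq_of_mem_euclidStates (hdn : d ≤ n) (hen : e ≤ n)
    (hs : s ∈ euclidStates [] n d) (ht : t ∈ euclidStates [] n e)
    (hcont : contPair (1, 0) s.quots = contPair (1, 0) t.quots) (hb : s.b = t.b)
    (hflag : n / d = 1 ↔ n / e = 1) : d = e ∧ s = t := by
  have hps := pos_of_mem_quots hdn hs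
  have hpt := pos_of_mem_quots hen ht
  have hnil : s.quots ≠ [] ↔ t.quots ≠ [] := by
    rw [ne_eq, ne_eq, ← contPair_snd_eq_zero_iff hps, ← contPair_snd_eq_zero_iff hpt, hcont]
  have hq : s.quots = t.quots := eq_of_contPair_eq hps hpt hcont <| by
    rw [quots_getLast?_eq_some_one_iff hdn hs, quots_getLast?_eq_some_one_iff hen ht, hnil, hflag]
  obtain ⟨hns, hds⟩ := contPair_dot_of_mem_euclidStates hs
  obtain ⟨hnt, hdt⟩ := contPair_dot_of_mem_euclidStates ht
  rw [hq, hb] at hns hds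
  have ha : s.a = t.a := by
    refine Nat.eq_of_mul_eq_mul_left (one_le_contPair_fst hpt) ?_
    omega
  rw [ha] at hds
  refine ⟨hds.symm.trans hdt, ?_⟩
  cases s
  cases t
  simp_all

/-- The possible triples `(A, u, b)` of a state with `n = A * a + u * b`, `gcd A u = 1` and
`a / b ≥ M`. -/
def tripleSet (n M : ℕ) : Finset (ℕ × ℕ × ℕ) :=
  (Icc 1 n).biUnion fun A => {b ∈ Icc 1 (n / (M * A)) | A.gcd b = A.gcd n}.biUnion fun b =>
    {u ∈ range (A + 1) | u * b % A = n % A}.image fun u => (A, u, b)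

lemma mem_tripleSet_of_mem_euclidStates {M : ℕ} (hM : 0 < M) (hdn : d ≤ n)
    (hs : s ∈ euclidStates [] n d) (hq : M ≤ s.a / s.b) :
    ((contPair (1, 0) s.quots).1, (contPair (1, 0) s.quots).2, s.b) ∈ tripleSet n M := by
  have hb := b_pos_of_mem_euclidStates hs
  have hba := b_le_a_of_mem_euclidStates hdn hs
  have hps := pos_of_mem_quots hdn hs
  have hcop := coprime_contPair s.quots
  have hA := one_le_contPair_fst hps
  have huA := contPair_snd_le_fst hps
  have hn := (contPair_dot_of_mem_euclidStates hs).1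
  set A := (contPair (1, 0) s.quots).1
  set u := (contPair (1, 0) s.quots).2
  have hMb : M * s.b ≤ s.a := (Nat.le_div_iff_mul_le hb).1 hq
  have hMAb : s.b * (M * A) ≤ n := by nlinarith
  have hgcd : A.gcd s.b = A.gcd n := by
    rw [← hn, Nat.gcd_mul_left_add_right, hcop.symm.gcd_mul_left_cancel_right]
  have hmod : u * s.b % A = n % A := by rw [← hn, Nat.mul_add_mod]
  simp only [tripleSet, mem_biUnion, mem_image, mem_filter, mem_Icc, mem_range]
  exact ⟨A, ⟨hA, by nlinarith⟩, s.b, ⟨⟨hb, (Nat.le_div_iff_mul_le (by positivity)).2 hMAb⟩, hgcd⟩,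
    u, ⟨by omega, hmod⟩, rfl⟩

end injection

lemma card_tripleSet_le (n M : ℕ) : #(tripleSet n M) ≤ ∑ A ∈ Icc 1 n, 2 * (n / (M * A)) := by
  refine card_biUnion_le.trans (sum_le_sum fun A hA => ?_)
  have hA : 0 < A := (mem_Icc.1 hA).1
  set h := A.gcd n
  have hh : 0 < h := Nat.gcd_pos_of_pos_left n hA
  calc _ ≤ ∑ b ∈ {b ∈ Icc 1 (n / (M * A)) | A.gcd b = h}, (h + 1) := by
        refine card_biUnion_le.trans (sum_le_sum fun b hb => card_image_le.trans ?_)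
        rw [← (mem_filter.1 hb).2]
        exact card_filter_mul_mod_eq_le A b _ hA
    _ ≤ (h + 1) * (n / (M * A) / h) := by
        rw [sum_const, smul_eq_mul, mul_comm]
        exact Nat.mul_le_mul_left _ (card_filter_gcd_eq_le A n _)
    _ ≤ 2 * h * (n / (M * A) / h) := by gcongr; omega
    _ ≤ 2 * (n / (M * A)) := by
        rw [mul_assoc]
        exact Nat.mul_le_mul_left 2 (Nat.mul_div_le _ _)

lemma sum_countP_le_card_tripleSet {n M : ℕ} (hM : 0 < M) :
    ∑ d ∈ Icc 1 n, (euclidQuotients n d).countP (M ≤ ·) ≤ 2 * #(tripleSet n M) := by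
  have hcount : ∀ d, (euclidQuotients n d).countP (M ≤ ·) =
      #((euclidStates [] n d).filter (fun s => M ≤ s.a / s.b)).toFinset := by
    intro d
    rw [List.toFinset_card_of_nodup ((nodup_euclidStates [] n d).filter _),
      ← List.countP_eq_length_filter, ← map_quot_euclidStates [] n d, List.countP_map]
    rfl
  simp only [hcount, ← card_sigma]
  calc _ ≤ #(tripleSet n M ×ˢ (univ : Finset Bool)) := by
        refine card_le_card_of_injOn
          (fun p => (((contPair (1, 0) p.2.quots).1, (contPair (1, 0) p.2.quots).2, p.2.b),
            decide (n / p.1 = 1))) (fun ⟨d, s⟩ hp => ?_) fun ⟨d, s⟩ hp ⟨e, t⟩ hq h => ?_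
        · simp only [mem_coe, mem_sigma, mem_Icc, List.mem_toFinset, List.mem_filter,
            decide_eq_true_eq] at hp
          exact mem_product.2 ⟨mem_tripleSet_of_mem_euclidStates hM hp.1.2 hp.2.1 hp.2.2, mem_univ _⟩
        · simp only [mem_coe, mem_sigma, mem_Icc, List.mem_toFinset, List.mem_filter] at hp hq
          simp only [Prod.mk.injEq, decide_eq_decide] at h
          obtain ⟨rfl, rfl⟩ := eq_of_mem_euclidStates hp.1.2 hq.1.2 hp.2.1 hq.2.1
            (Prod.ext h.1.1 h.1.2.1) h.1.2.2 h.2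
          rfl
    _ = 2 * #(tripleSet n M) := by simp [mul_comm]

lemma sum_quotOcc_le {n M : ℕ} (hM : 0 < M) :
    ∑ m ∈ Icc M n, quotOcc n m ≤ 4 * ∑ A ∈ Icc 1 n, n / (M * A) := by
  calc ∑ m ∈ Icc M n, quotOcc n m
      = ∑ d ∈ Ico 1 n with d.gcd n = 1, (euclidQuotients n d).countP (· ∈ Icc M n) := by
        simp only [quotOcc]
        rw [sum_comm]
        simp only [sum_count_eq_countP_mem]
    _ ≤ ∑ d ∈ Ico 1 n with d.gcd n = 1, (euclidQuotients n d).countP (M ≤ ·) :=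
        sum_le_sum fun d _ => List.countP_mono_left fun q _ hq => by simp_all
    _ ≤ ∑ d ∈ Icc 1 n, (euclidQuotients n d).countP (M ≤ ·) :=
        sum_le_sum_of_subset ((filter_subset _ _).trans Ico_subset_Icc_self)
    _ ≤ 2 * #(tripleSet n M) := sum_countP_le_card_tripleSet hM
    _ ≤ 2 * ∑ A ∈ Icc 1 n, 2 * (n / (M * A)) := Nat.mul_le_mul_left 2 (card_tripleSet_le n M)
    _ = 4 * ∑ A ∈ Icc 1 n, n / (M * A) := by rw [← mul_sum, ← mul_assoc]; norm_num

lemma sum_div_mul_le (n M : ℕ) :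
    ((∑ A ∈ Icc 1 n, n / (M * A) : ℕ) : ℝ) ≤ n / M * (1 + Real.log n) := by
  calc ((∑ A ∈ Icc 1 n, n / (M * A) : ℕ) : ℝ) ≤ ∑ A ∈ Icc 1 n, (n : ℝ) / M * (A : ℝ)⁻¹ := by
        push_cast
        refine sum_le_sum fun A _ => Nat.cast_div_le.trans_eq ?_
        push_cast
        ring
    _ = n / M * (harmonic n : ℝ) := by simp [harmonic_eq_sum_Icc, mul_sum]
    _ ≤ n / M * (1 + Real.log n) := by gcongr; exact harmonic_le_one_add_log n

theorem statement4_general (K : ℝ) :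
    ∃ C : ℝ, 0 < C ∧ ∀ n : ℕ, 2 ≤ n → ∀ M : ℕ, 1 ≤ M →
      (M : ℝ) ≤ K * (Real.log n) ^ 2 →
      ((∑ m ∈ Finset.Icc M n, quotOcc n m : ℕ) : ℝ) ≤ C * n * Real.log n / M := by
  refine ⟨16, by norm_num, fun n hn M hM _ => ?_⟩
  have hlog : 1 + Real.log n ≤ 4 * Real.log n := by
    have := Real.log_le_log (by norm_num) (show (2 : ℝ) ≤ n by exact_mod_cast hn)
    linarith [Real.log_two_gt_d9]
  calc ((∑ m ∈ Icc M n, quotOcc n m : ℕ) : ℝ) ≤ ((4 * ∑ A ∈ Icc 1 n, n / (M * A) : ℕ) : ℝ) :=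
        Nat.cast_le.2 (sum_quotOcc_le hM)
    _ ≤ 4 * (n / M * (1 + Real.log n)) := by
        push_cast
        exact mul_le_mul_of_nonneg_left (by exact_mod_cast sum_div_mul_le n M) (by norm_num)
    _ ≤ 4 * (n / M * (4 * Real.log n)) := by gcongr
    _ = 16 * n * Real.log n / M := by ring

/-- For every constant `K > 0` there is a constant `C = C(K) > 0` such that for every
integer `n ≥ 2` and every integer `M` with `1 ≤ M ≤ K·(log n)²`, we have
`∑_{m = M}^{n} r(n, m) ≤ C·n·(log n)/M`. -/
theorem statement4 (K : ℝ) (hK : 0 < K) :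
    ∃ C : ℝ, 0 < C ∧ ∀ n : ℕ, 2 ≤ n → ∀ M : ℕ, 1 ≤ M →
      (M : ℝ) ≤ K * (Real.log n) ^ 2 →
      ((∑ m ∈ Finset.Icc M n, quotOcc n m : ℕ) : ℝ) ≤ C * n * Real.log n / M :=
  statement4_general K
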